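/- arXiv:1209.1119 — 2 statements merged into one kernel-verified Lean document; each statement's English description precedes it below -/
import Mathlib

section
/- Augment m ~ NB(r,p) as m = Σ_{t=1}^{l} u_t with u_t i.i.d. Log(p) and l ~ Poisson(-r ln(1-p)). Then the conditional posterior of l given m is P(l = j | m) = (Γ(r)/Γ(m+r)) |s(m,j)| r^j for j = 0, 1, ..., m. -/
noncomputable def poissonPMF (μ : ℝ) (k : ℕ) : ℝ :=
  Real.exp (-μ) * μ ^ k / (Nat.factorial k)

noncomputable def logPMF (p : ℝ) (k : ℕ) : ℝ :=
  -(p ^ k) / (k * Real.log (1 - p))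

/-- `logConvPow p l` is the PMF of the sum of `l` i.i.d. Log(p) random variables. -/
noncomputable def logConvPow (p : ℝ) : ℕ → ℕ → ℝ
  | 0, k => if k = 0 then 1 else 0
  | l + 1, k => ∑ i ∈ Finset.range (k + 1), logConvPow p l i * logPMF p (k - i)

/-- Unsigned Stirling numbers of the first kind. -/
def stirling1 : ℕ → ℕ → ℕ
  | 0, 0 => 1
  | 0, _ + 1 => 0
  | _ + 1, 0 => 0
  | m + 1, j + 1 => stirling1 m j + m * stirling1 m (j + 1)

/-!
Let `L = -log (1 - X) = ∑ Xᵏ / k`. The Log(p) law has generating series `L (p X) / (-log (1 - p))`,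
so the `j`-fold convolution at `m` is `p ^ m [Xᵐ] Lʲ / (-log (1 - p)) ^ j`, and
`Lʲ = j! ∑ₘ s(m, j) Xᵐ / m!`. The last identity follows by induction on `j`: for
`Fⱼ = ∑ₘ s(m, j) Xᵐ / m!` the Stirling recurrence reads `(1 - X) F'ⱼ₊₁ = Fⱼ`, and `(1 - X) L' = 1`,
so both sides of `Fⱼ L = (j + 1) Fⱼ₊₁` have the same image under `(1 - X) d/dX` and vanish at `0`.
Multiplied by the Poisson weight, the `j`-th term becomes a constant times `s(m, j) rʲ`, and
`∑ⱼ s(m, j) rʲ` is the rising factorial `r (r + 1) ⋯ (r + m - 1) = Γ(m + r) / Γ(r)`.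
-/

theorem stirling1_eq_stirlingFirst : stirling1 = Nat.stirlingFirst := by
  funext m j
  induction m generalizing j with
  | zero => cases j <;> rfl
  | succ m ih =>
    cases j with
    | zero => rfl
    | succ j => rw [stirling1, Nat.stirlingFirst_succ_succ, ih, ih, add_comm]

section

open Polynomial

theorem coeff_ascPochhammer_nat (m j : ℕ) :
    (ascPochhammer ℕ m).coeff j = Nat.stirlingFirst m j := by
  induction m generalizing j with
  | zero => cases j <;> simp [coeff_one]
  | succ m ih =>
    rw [ascPochhammer_succ_right, mul_add, coeff_add, ← C_eq_natCast, coeff_mul_C]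
    cases j with
    | zero => cases m <;> simp [ih]
    | succ j =>
      rw [coeff_mul_X, ih, ih, Nat.stirlingFirst_succ_succ, Nat.cast_id, add_comm, mul_comm]

theorem sum_stirlingFirst_mul_pow {R : Type*} [CommSemiring R] (m : ℕ) (r : R) :
    ∑ j ∈ Finset.range (m + 1), (Nat.stirlingFirst m j : R) * r ^ j
      = (ascPochhammer R m).eval r := by
  rw [← ascPochhammer_map (Nat.castRingHom R), eval_map, eval₂_eq_sum_range,
    ascPochhammer_natDegree]
  simp [coeff_ascPochhammer_nat]

theorem tsum_stirlingFirst_mul_pow {R : Type*} [CommSemiring R] [TopologicalSpace R] (m : ℕ)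
    (r : R) : ∑' j, (Nat.stirlingFirst m j : R) * r ^ j = (ascPochhammer R m).eval r := by
  rw [tsum_eq_sum (s := Finset.range (m + 1)), sum_stirlingFirst_mul_pow]
  intro j hj
  rw [Nat.stirlingFirst_eq_zero_of_lt (by simpa using hj), Nat.cast_zero, zero_mul]

theorem Real.Gamma_nat_add_eq_ascPochhammer_mul {r : ℝ} (hr : ∀ k : ℕ, r ≠ -k) (n : ℕ) :
    Real.Gamma (n + r) = (ascPochhammer ℝ n).eval r * Real.Gamma r := by
  induction n with
  | zero => simp
  | succ n ih =>
    have hne : (n : ℝ) + r ≠ 0 := fun h => hr n (by linarith)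
    rw [ascPochhammer_succ_right, eval_mul, Nat.cast_succ, add_right_comm,
      Real.Gamma_add_one hne, ih]
    simp only [eval_add, eval_X, eval_natCast]
    ring

end

namespace PowerSeries

/-- The series of `-log (1 - X)`; the junk value `0⁻¹ = 0` gives the zero constant term. -/
def negLogOneSub (K : Type*) [Field K] : K⟦X⟧ := mk fun k => (k : K)⁻¹

def stirlingFirstEGF (K : Type*) [Field K] (j : ℕ) : K⟦X⟧ :=
  mk fun m => (Nat.stirlingFirst m j : K) / m.factorial

variable {K : Type*} [Field K]

theorem stirlingFirstEGF_zero : stirlingFirstEGF K 0 = 1 := by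
  ext m
  cases m <;> simp [stirlingFirstEGF, coeff_one]

theorem constantCoeff_stirlingFirstEGF_succ (j : ℕ) :
    constantCoeff (stirlingFirstEGF K (j + 1)) = 0 := by
  simp [stirlingFirstEGF, constantCoeff_mk]

variable [CharZero K]

theorem eq_of_one_sub_X_mul_derivative_eq {f g : K⟦X⟧}
    (hD : (1 - X) * d⁄dX K f = (1 - X) * d⁄dX K g) (hc : constantCoeff f = constantCoeff g) :
    f = g := by
  have hunit : IsUnit (1 - X : K⟦X⟧) := .of_mul_eq_one_right _ (mk_one_mul_one_sub_eq_one K)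
  exact derivative.ext (hunit.mul_left_cancel hD) hc

theorem one_sub_X_mul_derivative_negLogOneSub : (1 - X) * d⁄dX K (negLogOneSub K) = 1 := by
  have h : d⁄dX K (negLogOneSub K) = mk 1 := by
    ext n
    rw [coeff_derivative, negLogOneSub, coeff_mk, coeff_mk, Nat.cast_succ,
      inv_mul_cancel₀ (Nat.cast_add_one_ne_zero n), Pi.one_apply]
  rw [h, mul_comm, mk_one_mul_one_sub_eq_one]

theorem one_sub_X_mul_derivative_mul_negLogOneSub (f : K⟦X⟧) :
    (1 - X) * d⁄dX K (f * negLogOneSub K) = (1 - X) * d⁄dX K f * negLogOneSub K + f := by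
  rw [Derivation.leibniz, smul_eq_mul, smul_eq_mul, mul_add, ← mul_assoc, mul_comm (1 - X) f,
    mul_assoc, one_sub_X_mul_derivative_negLogOneSub]
  ring

theorem one_sub_X_mul_derivative_stirlingFirstEGF_succ (j : ℕ) :
    (1 - X) * d⁄dX K (stirlingFirstEGF K (j + 1)) = stirlingFirstEGF K j := by
  ext n
  rw [sub_mul, one_mul, map_sub]
  cases n with
  | zero => simp [coeff_derivative, stirlingFirstEGF, Nat.stirlingFirst_succ_succ]
  | succ n =>
    simp only [coeff_succ_X_mul, coeff_derivative, stirlingFirstEGF, coeff_mk,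
      Nat.stirlingFirst_succ_succ (n + 1) j, Nat.factorial_succ]
    push_cast
    have : (n : K) + 1 + 1 ≠ 0 := by exact_mod_cast (n + 1).succ_ne_zero
    field_simp
    ring

theorem stirlingFirstEGF_mul_negLogOneSub (j : ℕ) :
    stirlingFirstEGF K j * negLogOneSub K = (j + 1) • stirlingFirstEGF K (j + 1) := by
  have hc : ∀ i, constantCoeff (stirlingFirstEGF K i * negLogOneSub K)
      = constantCoeff ((i + 1) • stirlingFirstEGF K (i + 1)) := fun i => by
    simp [negLogOneSub, constantCoeff_mk, constantCoeff_stirlingFirstEGF_succ]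
  induction j with
  | zero =>
    refine eq_of_one_sub_X_mul_derivative_eq ?_ (hc 0)
    rw [one_sub_X_mul_derivative_mul_negLogOneSub, map_nsmul, mul_smul_comm,
      one_sub_X_mul_derivative_stirlingFirstEGF_succ]
    simp [stirlingFirstEGF_zero]
  | succ j ih =>
    refine eq_of_one_sub_X_mul_derivative_eq ?_ (hc (j + 1))
    rw [one_sub_X_mul_derivative_mul_negLogOneSub, map_nsmul, mul_smul_comm,
      one_sub_X_mul_derivative_stirlingFirstEGF_succ,
      one_sub_X_mul_derivative_stirlingFirstEGF_succ, ih, ← succ_nsmul]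

theorem negLogOneSub_pow (j : ℕ) : negLogOneSub K ^ j = j.factorial • stirlingFirstEGF K j := by
  induction j with
  | zero => simp [stirlingFirstEGF_zero]
  | succ j ih =>
    rw [pow_succ, ih, smul_mul_assoc, stirlingFirstEGF_mul_negLogOneSub, smul_smul,
      Nat.factorial_succ, mul_comm]

theorem coeff_negLogOneSub_pow (m j : ℕ) :
    coeff m (negLogOneSub K ^ j) = j.factorial * Nat.stirlingFirst m j / m.factorial := by
  rw [negLogOneSub_pow, map_nsmul, stirlingFirstEGF, coeff_mk, nsmul_eq_mul, mul_div_assoc]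

end PowerSeries

section

open PowerSeries

theorem logConvPow_eq_coeff_pow (p : ℝ) (j m : ℕ) :
    logConvPow p j m = coeff m (mk (logPMF p) ^ j) := by
  induction j generalizing m with
  | zero => simp [logConvPow, coeff_one]
  | succ j ih =>
    rw [logConvPow, pow_succ, coeff_mul, Finset.Nat.sum_antidiagonal_eq_sum_range_succ
      (fun i k => coeff i (mk (logPMF p) ^ j) * coeff k (mk (logPMF p)))]
    simp only [ih, coeff_mk]

theorem mk_logPMF (p : ℝ) :
    mk (logPMF p) = C (-Real.log (1 - p))⁻¹ * rescale p (negLogOneSub ℝ) := by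
  ext k
  rw [coeff_mk, coeff_C_mul, coeff_rescale, negLogOneSub, coeff_mk, logPMF]
  ring

theorem logConvPow_eq (p : ℝ) (j m : ℕ) :
    logConvPow p j m = (-Real.log (1 - p))⁻¹ ^ j * p ^ m
      * (j.factorial * Nat.stirlingFirst m j / m.factorial) := by
  rw [logConvPow_eq_coeff_pow, mk_logPMF, mul_pow, ← map_pow, ← map_pow, coeff_C_mul,
    coeff_rescale, coeff_negLogOneSub_pow, mul_assoc]

end

theorem logConvPow_mul_poissonPMF (r : ℝ) {p : ℝ} (hp : Real.log (1 - p) ≠ 0) (j m : ℕ) :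
    logConvPow p j m * poissonPMF (-r * Real.log (1 - p)) j
      = Real.exp (r * Real.log (1 - p)) * p ^ m / m.factorial
        * (Nat.stirlingFirst m j * r ^ j) := by
  have hq : -Real.log (1 - p) ≠ 0 := neg_ne_zero.mpr hp
  rw [logConvPow_eq, poissonPMF, neg_mul, neg_neg, ← mul_neg, mul_pow, inv_pow]
  field_simp

theorem crt_conditional_posterior_general (r p : ℝ) (hr : 0 < r) (hp : 0 < p) (hp1 : p < 1)
    (m j : ℕ) :
    (logConvPow p j m * poissonPMF (-r * Real.log (1 - p)) j)
      / (∑' j' : ℕ, logConvPow p j' m * poissonPMF (-r * Real.log (1 - p)) j')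
    = Real.Gamma r / Real.Gamma (m + r) * stirling1 m j * r ^ j := by
  have hlog : Real.log (1 - p) ≠ 0 := (Real.log_neg (by linarith) (by linarith)).ne
  simp only [logConvPow_mul_poissonPMF r hlog, tsum_mul_left, tsum_stirlingFirst_mul_pow,
    stirling1_eq_stirlingFirst]
  rw [Real.Gamma_nat_add_eq_ascPochhammer_mul
    (fun k => ((neg_nonpos.mpr k.cast_nonneg).trans_lt hr).ne')]
  have hc : Real.exp (r * Real.log (1 - p)) * p ^ m / m.factorial ≠ 0 := by positivity
  have hpoch : (ascPochhammer ℝ m).eval r ≠ 0 := (ascPochhammer_pos m r hr).ne'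
  have hΓ : Real.Gamma r ≠ 0 := (Real.Gamma_pos_of_pos hr).ne'
  field_simp

/-- Lemma 1: in the compound Poisson augmentation m = Σ_{t=1}^l Log(p),
l ~ Poisson(-r ln(1-p)), the conditional posterior of l given m is
P(l = j | m) = (Γ(r)/Γ(m+r)) |s(m,j)| r^j for 0 ≤ j ≤ m. -/
theorem crt_conditional_posterior (r p : ℝ) (hr : 0 < r) (hp : 0 < p) (hp1 : p < 1)
    (m j : ℕ) (hj : j ≤ m) :
    (logConvPow p j m * poissonPMF (-r * Real.log (1 - p)) j)
      / (∑' j' : ℕ, logConvPow p j' m * poissonPMF (-r * Real.log (1 - p)) j')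
    = Real.Gamma r / Real.Gamma (m + r) * stirling1 m j * r ^ j :=
  crt_conditional_posterior_general r p hr hp hp1 m j
end

section
/- Let m ~ NB(r,p) with r ~ Gamma(r₁, 1/c₁), and set p' = -ln(1-p)/(c₁ - ln(1-p)). Then m can equivalently be generated by the compound hierarchy: l' ~ Poisson(-r₁ ln(1-p')), l = Σ_{t'=1}^{l'} Log(p'), m = Σ_{t=1}^{l} Log(p). In particular, if l ~ Poisson(-r ln(1-p)) with r ~ Gamma(r₁, 1/c₁), then marginally l ~ NB(r₁, p'). -/
/-
NB(x, p) and the compound Poisson(-x log (1 - p)) law of Log(p) summands both have generating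
functions F with F' = x p / (1 - p z) · F and F(0) = (1 - p)^x. Read coefficientwise this is
Panjer's recursion (k + 1) F(k + 1) = Σ_{i + j = k} F(i) a(j), which determines F; for the compound
law it comes from (Q^(l + 1))' = (l + 1) Q^l Q', Q the Log(p) generating function. Mixing
Poisson(x ρ) over x ~ Gamma(a, 1/c) leaves the Gamma integral ∫ x^(a + l - 1) e^(-(c + ρ) x) dx,
which is NB(a, ρ / (c + ρ)) up to constants. Since only the first k + 1 convolution powers of Log(p)
charge k, the compound representation of NB(x, p) can be mixed term by term.
-/

open MeasureTheory

noncomputable def gammaPDF (a θ x : ℝ) : ℝ :=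
  if 0 < x then x ^ (a - 1) * Real.exp (-x / θ) / (Real.Gamma a * θ ^ a) else 0

noncomputable def nbPMF (r p : ℝ) (k : ℕ) : ℝ :=
  Real.Gamma (r + k) / (Nat.factorial k * Real.Gamma r) * (1 - p) ^ r * p ^ k

open Finset PowerSeries
open scoped Nat

lemma eq_of_succ_mul_eq_sum_antidiagonal {K : Type*} [Field K] [CharZero K] {a f g : ℕ → K}
    (h₀ : f 0 = g 0)
    (hf : ∀ k : ℕ, ((k : K) + 1) * f (k + 1) = ∑ ij ∈ antidiagonal k, f ij.1 * a ij.2)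
    (hg : ∀ k : ℕ, ((k : K) + 1) * g (k + 1) = ∑ ij ∈ antidiagonal k, g ij.1 * a ij.2) :
    f = g := by
  funext n
  induction n using Nat.strong_induction_on with
  | _ n ih =>
    cases n with
    | zero => exact h₀
    | succ k =>
      refine mul_left_cancel₀ (Nat.cast_add_one_ne_zero k) ?_
      rw [hf, hg]
      refine sum_congr rfl fun ij hij => ?_
      rw [ih ij.1 (by have := mem_antidiagonal.1 hij; omega)]

lemma logPMF_zero (p : ℝ) : logPMF p 0 = 0 := by
  simp [logPMF]

lemma succ_mul_logPMF_succ (p : ℝ) (n : ℕ) :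
    ((n : ℝ) + 1) * logPMF p (n + 1) = p ^ (n + 1) / -Real.log (1 - p) := by
  rw [logPMF, Nat.cast_succ, mul_div_assoc', mul_div_mul_left _ _ (Nat.cast_add_one_ne_zero n),
    div_neg, neg_div]

lemma logConvPow_eq_coeff (p : ℝ) (l k : ℕ) :
    logConvPow p l k = coeff k (mk (logPMF p) ^ l) := by
  induction l generalizing k with
  | zero => simp [logConvPow, coeff_one]
  | succ l ih =>
    rw [logConvPow, pow_succ, coeff_mul, Nat.sum_antidiagonal_eq_sum_range_succ
      (fun i j => coeff i (mk (logPMF p) ^ l) * coeff j (mk (logPMF p)))]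
    simp only [ih, coeff_mk]

lemma succ_mul_logConvPow_succ (p : ℝ) (l k : ℕ) :
    ((k : ℝ) + 1) * logConvPow p (l + 1) (k + 1) =
      (l + 1) * ∑ ij ∈ antidiagonal k,
        logConvPow p l ij.1 * ((ij.2 + 1) * logPMF p (ij.2 + 1)) := by
  have h := congrArg (coeff k) (derivative_pow (mk (logPMF p)) (l + 1))
  rw [← map_natCast (C (R := ℝ)), mul_assoc, coeff_C_mul, coeff_mul] at h
  simp only [Nat.add_sub_cancel, coeff_derivative, coeff_mk, ← logConvPow_eq_coeff] at h
  push_cast at h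
  rw [mul_comm, h]
  simp only [mul_comm (logPMF p _)]

lemma logConvPow_eq_zero_of_lt (p : ℝ) {l k : ℕ} (h : k < l) : logConvPow p l k = 0 := by
  rw [logConvPow_eq_coeff]
  refine coeff_of_lt_order _ (lt_of_lt_of_le ?_ (le_order_pow_of_constantCoeff_eq_zero l ?_))
  · exact_mod_cast h
  · simp [logPMF_zero]

lemma succ_mul_poissonPMF_succ (μ : ℝ) (l : ℕ) :
    ((l : ℝ) + 1) * poissonPMF μ (l + 1) = μ * poissonPMF μ l := by
  simp only [poissonPMF, Nat.factorial_succ, Nat.cast_mul, pow_succ]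
  field_simp
  push_cast
  ring

/-- The law of a Poisson(`μ`) sum of i.i.d. Log(`p`) variables; the sum stops at `l = k` because
Log(`p`) ≥ 1. -/
noncomputable def compPMF (μ p : ℝ) (k : ℕ) : ℝ :=
  ∑ l ∈ range (k + 1), poissonPMF μ l * logConvPow p l k

lemma sum_range_poissonPMF_mul_logConvPow {n k : ℕ} (h : k < n) (μ p : ℝ) :
    ∑ l ∈ range n, poissonPMF μ l * logConvPow p l k = compPMF μ p k := by
  refine (sum_subset (range_subset_range.2 h) fun l _ hl => ?_).symm
  rw [logConvPow_eq_zero_of_lt p (by simpa using hl), mul_zero]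

lemma succ_mul_compPMF_succ (μ p : ℝ) (k : ℕ) :
    ((k : ℝ) + 1) * compPMF μ p (k + 1) =
      ∑ ij ∈ antidiagonal k, compPMF μ p ij.1 * (μ * ((ij.2 + 1) * logPMF p (ij.2 + 1))) := by
  calc ((k : ℝ) + 1) * compPMF μ p (k + 1)
      = ∑ l ∈ range (k + 1), ((l : ℝ) + 1) * poissonPMF μ (l + 1) * ∑ ij ∈ antidiagonal k,
          logConvPow p l ij.1 * ((ij.2 + 1) * logPMF p (ij.2 + 1)) := by
        rw [compPMF, sum_range_succ', logConvPow.eq_1, if_neg k.succ_ne_zero, mul_zero, add_zero,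
          mul_sum]
        refine sum_congr rfl fun l _ => ?_
        rw [mul_left_comm, succ_mul_logConvPow_succ]
        ring
    _ = ∑ ij ∈ antidiagonal k, (∑ l ∈ range (k + 1), poissonPMF μ l * logConvPow p l ij.1) *
          (μ * ((ij.2 + 1) * logPMF p (ij.2 + 1))) := by
        simp only [succ_mul_poissonPMF_succ, mul_sum, sum_mul]
        rw [sum_comm]
        refine sum_congr rfl fun ij _ => sum_congr rfl fun l _ => by ring
    _ = _ := by
        refine sum_congr rfl fun ij hij => ?_
        rw [sum_range_poissonPMF_mul_logConvPow]
        have := mem_antidiagonal.1 hij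
        omega

lemma mul_sum_range_Gamma_add_div_factorial {x : ℝ} (hx : 0 < x) (k : ℕ) :
    x * ∑ i ∈ range (k + 1), Real.Gamma (x + i) / i ! = Real.Gamma (x + (k + 1)) / k ! := by
  induction k with
  | zero => simp [Real.Gamma_add_one hx.ne']
  | succ k ih =>
    rw [sum_range_succ, mul_add, ih, Nat.factorial_succ, Nat.cast_succ,
      show x + ((k : ℝ) + 1 + 1) = x + (k + 1) + 1 by ring, Real.Gamma_add_one (by positivity)]
    push_cast
    field_simp
    ring_nf

lemma succ_mul_nbPMF_succ {x : ℝ} (hx : 0 < x) (p : ℝ) (k : ℕ) :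
    ((k : ℝ) + 1) * nbPMF x p (k + 1) =
      ∑ ij ∈ antidiagonal k, nbPMF x p ij.1 * (x * p ^ (ij.2 + 1)) := by
  have hterm : ∀ ij ∈ antidiagonal k, nbPMF x p ij.1 * (x * p ^ (ij.2 + 1)) =
      (1 - p) ^ x * p ^ (k + 1) / Real.Gamma x * (x * (Real.Gamma (x + ij.1) / ij.1 !)) := by
    intro ij hij
    rw [← mem_antidiagonal.1 hij, nbPMF]
    field_simp
    ring
  rw [sum_congr rfl hterm, ← mul_sum, ← mul_sum,
    Nat.sum_antidiagonal_eq_sum_range_succ (fun i _ => Real.Gamma (x + i) / i !),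
    mul_sum_range_Gamma_add_div_factorial hx, nbPMF, Nat.factorial_succ]
  push_cast
  field_simp

lemma neg_log_one_sub_pos {p : ℝ} (hp : 0 < p) (hp1 : p < 1) : 0 < -Real.log (1 - p) :=
  neg_pos.2 (Real.log_neg (by linarith) (by linarith))

lemma nbPMF_eq_compPMF {x p : ℝ} (hx : 0 < x) (hp : 0 < p) (hp1 : p < 1) :
    nbPMF x p = compPMF (x * -Real.log (1 - p)) p := by
  have hL := (neg_log_one_sub_pos hp hp1).ne'
  refine eq_of_succ_mul_eq_sum_antidiagonal
    (a := fun j => x * -Real.log (1 - p) * ((j + 1) * logPMF p (j + 1))) ?_ (fun k => ?_)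
    (succ_mul_compPMF_succ _ p)
  · simp [nbPMF, compPMF, poissonPMF, logConvPow, (Real.Gamma_pos_of_pos hx).ne',
      Real.rpow_def_of_pos (sub_pos.2 hp1), mul_comm]
  · simp only [succ_mul_nbPMF_succ hx, succ_mul_logPMF_succ, mul_assoc, mul_div_cancel₀ _ hL]

lemma poissonPMF_mul_gammaPDF {a c ρ x : ℝ} (hc : 0 < c) (hx : 0 < x) (l : ℕ) :
    poissonPMF (x * ρ) l * gammaPDF a (1 / c) x =
      ρ ^ l * c ^ a / (l ! * Real.Gamma a) * (x ^ (a + l - 1) * Real.exp (-((c + ρ) * x))) := by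
  have hxl : x ^ (a + l - 1) = x ^ (a - 1) * x ^ l := by
    rw [← Real.rpow_natCast, ← Real.rpow_add hx]
    ring_nf
  have hexp : Real.exp (-((c + ρ) * x)) = Real.exp (-(x * ρ)) * Real.exp (-x / (1 / c)) := by
    rw [← Real.exp_add]
    congr 1
    field_simp
    ring
  rw [poissonPMF, gammaPDF, if_pos hx, hxl, hexp, one_div, Real.inv_rpow hc.le, mul_pow]
  field_simp

lemma integrableOn_poissonPMF_mul_gammaPDF {a c ρ : ℝ} (ha : 0 < a) (hc : 0 < c) (hρ : 0 ≤ ρ)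
    (l : ℕ) :
    IntegrableOn (fun x => poissonPMF (x * ρ) l * gammaPDF a (1 / c) x) (Set.Ioi 0) := by
  have h := (integrableOn_rpow_mul_exp_neg_mul_rpow (s := a + l - 1)
    (by linarith [l.cast_nonneg (α := ℝ)]) zero_lt_one (by positivity : 0 < c + ρ)).const_mul
    (ρ ^ l * c ^ a / (l ! * Real.Gamma a))
  refine IntegrableOn.congr_fun h (fun x hx => ?_) measurableSet_Ioi
  rw [poissonPMF_mul_gammaPDF hc hx, Real.rpow_one, neg_mul]

lemma integral_poissonPMF_mul_gammaPDF {a c ρ : ℝ} (ha : 0 < a) (hc : 0 < c) (hρ : 0 ≤ ρ)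
    (l : ℕ) :
    ∫ x in Set.Ioi 0, poissonPMF (x * ρ) l * gammaPDF a (1 / c) x = nbPMF a (ρ / (c + ρ)) l := by
  have hcρ : 0 < c + ρ := by positivity
  rw [setIntegral_congr_fun measurableSet_Ioi fun x hx => poissonPMF_mul_gammaPDF hc hx l,
    integral_const_mul, Real.integral_rpow_mul_exp_neg_mul_Ioi (by positivity) hcρ, nbPMF,
    one_sub_div hcρ.ne', add_sub_cancel_right, Real.div_rpow hc.le hcρ.le, one_div,
    Real.inv_rpow hcρ.le, Real.rpow_add hcρ, Real.rpow_natCast, div_pow]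
  field_simp

lemma integral_nbPMF_mul_gammaPDF {a c p : ℝ} (ha : 0 < a) (hc : 0 < c) (hp : 0 < p) (hp1 : p < 1)
    (k : ℕ) :
    ∫ x in Set.Ioi 0, nbPMF x p k * gammaPDF a (1 / c) x =
      ∑ l ∈ range (k + 1),
        nbPMF a (-Real.log (1 - p) / (c + -Real.log (1 - p))) l * logConvPow p l k := by
  have hL := (neg_log_one_sub_pos hp hp1).le
  rw [setIntegral_congr_fun measurableSet_Ioi fun x (hx : 0 < x) => by
      rw [nbPMF_eq_compPMF hx hp hp1, compPMF, sum_mul],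
    integral_finsetSum _ fun l _ => ?_]
  · refine sum_congr rfl fun l _ => ?_
    simp_rw [mul_comm (poissonPMF _ l), mul_assoc]
    rw [integral_const_mul, integral_poissonPMF_mul_gammaPDF ha hc hL, mul_comm]
  · simp_rw [mul_comm (poissonPMF _ l), mul_assoc]
    exact (integrableOn_poissonPMF_mul_gammaPDF ha hc hL l).const_mul _

/-- Lemma 2: with m ~ NB(r,p), r ~ Gamma(r₁,1/c₁) and p' = -ln(1-p)/(c₁-ln(1-p)):
if l ~ Poisson(-r ln(1-p)) then marginally l ~ NB(r₁,p'); and m can equivalently be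
generated as m = Σ_{t=1}^l Log(p) with l ~ NB(r₁,p') (i.e. l the compound of Log(p')
sums over l' ~ Poisson(-r₁ ln(1-p'))). -/
theorem nb_gamma_mixed_compound (r₁ c₁ p : ℝ) (hr₁ : 0 < r₁) (hc₁ : 0 < c₁)
    (hp : 0 < p) (hp1 : p < 1) :
    (∀ l : ℕ,
      (∫ x in Set.Ioi (0 : ℝ),
          poissonPMF (-x * Real.log (1 - p)) l * gammaPDF r₁ (1 / c₁) x)
        = nbPMF r₁ (-Real.log (1 - p) / (c₁ - Real.log (1 - p))) l) ∧
    (∀ k : ℕ,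
      (∫ x in Set.Ioi (0 : ℝ), nbPMF x p k * gammaPDF r₁ (1 / c₁) x)
        = ∑' l : ℕ,
            nbPMF r₁ (-Real.log (1 - p) / (c₁ - Real.log (1 - p))) l
              * logConvPow p l k) := by
  have hL := (neg_log_one_sub_pos hp hp1).le
  rw [sub_eq_add_neg c₁]
  simp_rw [neg_mul_comm]
  refine ⟨integral_poissonPMF_mul_gammaPDF hr₁ hc₁ hL, fun k => ?_⟩
  rw [integral_nbPMF_mul_gammaPDF hr₁ hc₁ hp hp1, tsum_eq_sum fun l hl => ?_]
  rw [logConvPow_eq_zero_of_lt p (by simpa using hl), mul_zero]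
end
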